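/- Let A be a noncyclic finite abelian group of automorphisms of a noncyclic finite abelian p-group G, with gcd(|A|, p) = 1. Then there exists a ∈ A such that [G,a] is not cyclic. -/

import Mathlib

/-!
Write `Ω₁ = {x | x ^ p = 1}` and `W f = [Ω₁, f]`. An automorphism of order prime to `p` that is
trivial on `Ω₁` of a `p`-group is trivial, and `Ω₁ = C_{Ω₁}(f) · W f` (split `x` off its norm
over `⟨f⟩`). Hence if every `[G, f]`, `f ∈ A`, were cyclic, each `W f` with `f ≠ 1` would be a
line of order `p`. For commuting `a, b` with `W a ≠ W b`, `[W b, a] ≤ W a ∩ W b = 1`, so `a`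
centralises `W b` and then `W a ≤ W (a * b)`; symmetrically `W b ≤ W (a * b)`, which is
impossible. So all `W f` are one line `L`, on which `A` acts faithfully, and `A` embeds in
`Aut L ≃ (ZMod p)ˣ`.
-/

open Subgroup

section Group

variable {G : Type*} [Group G]

namespace MulAut

lemma apply_eq_self_of_coprime {p : ℕ} {f : MulAut G} (hf : (orderOf f).Coprime p) {g : G}
    (hv : (g⁻¹ * f g) ^ p = 1) (hfv : f (g⁻¹ * f g) = g⁻¹ * f g) : f g = g := by
  set v := g⁻¹ * f g
  have hpow : ∀ n : ℕ, (f ^ n) g = g * v ^ n := by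
    intro n
    induction n with
    | zero => simp
    | succ n ih =>
      rw [pow_succ', mul_apply, ih, map_mul, map_pow, hfv, pow_succ', ← mul_assoc,
        mul_inv_cancel_left]
  have hvm : v ^ orderOf f = 1 := by
    simpa [pow_orderOf_eq_one] using (hpow (orderOf f)).symm
  have hv1 : v = 1 := (pow_eq_one_iff_of_coprime hf).1 ⟨hvm, hv⟩
  exact (inv_mul_eq_one.1 hv1).symm

def restrictHom (A : Subgroup (MulAut G)) (L : Subgroup G) (hL : ∀ a ∈ A, ∀ x ∈ L, a x ∈ L) :
    A →* MulAut L where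
  toFun a :=
    { toFun x := ⟨(a : MulAut G) x, hL a a.2 x x.2⟩
      invFun x := ⟨(a : MulAut G)⁻¹ x, hL _ (inv_mem a.2) x x.2⟩
      left_inv x := by ext; simp
      right_inv x := by ext; simp
      map_mul' x y := by ext; simp }
  map_one' := rfl
  map_mul' _ _ := rfl

end MulAut

end Group

section CommGroup

variable {p : ℕ} {G : Type*} [CommGroup G]

namespace MulAut

def commutatorHom (f : MulAut G) : G →* G := (MonoidHom.id G)⁻¹ * f.toMonoidHom

@[simp]
lemma commutatorHom_apply (f : MulAut G) (g : G) : f.commutatorHom g = g⁻¹ * f g := rfl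

lemma closure_inv_mul_apply_eq_range (f : MulAut G) :
    closure {x : G | ∃ g : G, x = g⁻¹ * f g} = f.commutatorHom.range := by
  rw [← f.commutatorHom.range.closure_eq, MonoidHom.coe_range]
  congr 1
  ext x
  simp [eq_comm]

end MulAut

-- `Ω₁(G)`
variable (p G) in
def omegaOne : Subgroup G := (powMonoidHom p).ker

lemma mem_omegaOne {x : G} : x ∈ omegaOne p G ↔ x ^ p = 1 := Iff.rfl

lemma map_mem_omegaOne {H F : Type*} [CommGroup H] [FunLike F G H] [MonoidHomClass F G H] (f : F)
    {x : G} (hx : x ∈ omegaOne p G) : f x ∈ omegaOne p H := by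
  rw [mem_omegaOne] at hx ⊢
  rw [← map_pow, hx, map_one]

lemma IsPGroup.eq_one_of_forall_mem_omegaOne (hG : IsPGroup p G) {f : MulAut G}
    (hf : (orderOf f).Coprime p) (h : ∀ v ∈ omegaOne p G, f v = v) : f = 1 := by
  suffices ∀ k : ℕ, ∀ g : G, g ^ p ^ k = 1 → f g = g by
    ext g
    obtain ⟨k, hk⟩ := hG g
    exact this k g hk
  intro k
  induction k with
  | zero => simp
  | succ k ih =>
    intro g hg
    have hgp : f (g ^ p) = g ^ p := ih _ (by rwa [← pow_mul, ← pow_succ'])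
    have hv : (g⁻¹ * f g) ^ p = 1 := by rw [mul_pow, inv_pow, ← map_pow, hgp, inv_mul_cancel]
    exact MulAut.apply_eq_self_of_coprime hf hv (h _ hv)

-- `[Ω₁(G), f]`
variable (p) in
def commutatorOmegaOne (f : MulAut G) : Subgroup G := (omegaOne p G).map f.commutatorHom

lemma commutatorOmegaOne_le_omegaOne (f : MulAut G) :
    commutatorOmegaOne p f ≤ omegaOne p G := by
  rintro _ ⟨x, hx, rfl⟩
  exact map_mem_omegaOne f.commutatorHom hx

lemma commutatorOmegaOne_le_range (f : MulAut G) :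
    commutatorOmegaOne p f ≤ f.commutatorHom.range :=
  map_le_range _ _

lemma commutatorOmegaOne_eq_bot_iff {f : MulAut G} :
    commutatorOmegaOne p f = ⊥ ↔ ∀ v ∈ omegaOne p G, f v = v := by
  rw [commutatorOmegaOne, Subgroup.map_eq_bot_iff, SetLike.le_def]
  exact forall₂_congr fun v _ => by
    rw [MonoidHom.mem_ker, MulAut.commutatorHom_apply, inv_mul_eq_one, eq_comm]

lemma apply_mem_commutatorOmegaOne {a f : MulAut G} (h : Commute a f) {y : G}
    (hy : y ∈ commutatorOmegaOne p f) : a y ∈ commutatorOmegaOne p f := by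
  obtain ⟨x, hx, rfl⟩ := hy
  refine ⟨a x, map_mem_omegaOne a hx, ?_⟩
  have hfa : f (a x) = a (f x) := by rw [← MulAut.mul_apply, ← h.eq, MulAut.mul_apply]
  simp [hfa]

lemma inv_mul_pow_apply_mem_commutatorOmegaOne (f : MulAut G) {x : G} (hx : x ∈ omegaOne p G)
    (n : ℕ) : x⁻¹ * (f ^ n) x ∈ commutatorOmegaOne p f := by
  induction n with
  | zero => simp [one_mem]
  | succ n ih =>
    have h : x⁻¹ * (f ^ (n + 1)) x = x⁻¹ * (f ^ n) x * (f ^ n) (x⁻¹ * f x) := by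
      rw [pow_succ, MulAut.mul_apply, map_mul, map_inv, mul_assoc, mul_inv_cancel_left]
    rw [h]
    exact mul_mem ih (apply_mem_commutatorOmegaOne ((Commute.refl f).pow_left n) ⟨x, hx, rfl⟩)

lemma exists_fixed_pow_orderOf_mul_mem (f : MulAut G) {x : G} (hx : x ∈ omegaOne p G) :
    ∃ c ∈ omegaOne p G, f c = c ∧ x ^ orderOf f * c⁻¹ ∈ commutatorOmegaOne p f := by
  set s := ∏ i ∈ Finset.range (orderOf f), (f ^ i) x
  have hshift : ∏ i ∈ Finset.range (orderOf f), (f ^ (i + 1)) x = s := by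
    have h := Finset.prod_range_succ' (fun i => (f ^ i) x) (orderOf f)
    rw [Finset.prod_range_succ, pow_orderOf_eq_one, pow_zero] at h
    exact (mul_right_cancel h).symm
  refine ⟨s, prod_mem fun i _ => map_mem_omegaOne _ hx, ?_, ?_⟩
  · rw [map_prod, ← hshift]
    simp only [pow_succ', MulAut.mul_apply]
  · have h : x ^ orderOf f * s⁻¹ = ∏ i ∈ Finset.range (orderOf f), (x⁻¹ * (f ^ i) x)⁻¹ := by
      simp [s, Finset.prod_mul_distrib, Finset.prod_inv_distrib, mul_comm]
    rw [h]
    exact prod_mem fun i _ => inv_mem (inv_mul_pow_apply_mem_commutatorOmegaOne f hx i)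

lemma exists_fixed_mul_mem_of_coprime {f : MulAut G} (hf : (orderOf f).Coprime p) {x : G}
    (hx : x ∈ omegaOne p G) :
    ∃ c ∈ omegaOne p G, f c = c ∧ x * c⁻¹ ∈ commutatorOmegaOne p f := by
  obtain ⟨k, hk⟩ :=
    exists_pow_eq_self_of_coprime (hf.coprime_dvd_right (orderOf_dvd_of_pow_eq_one hx))
  obtain ⟨c, hc, hfc, hmem⟩ := exists_fixed_pow_orderOf_mul_mem f (pow_mem hx k)
  rw [pow_right_comm, hk] at hmem
  exact ⟨c, hc, hfc, hmem⟩

lemma IsPGroup.eq_one_of_forall_mem_commutatorOmegaOne (hG : IsPGroup p G) {f : MulAut G}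
    (hf : (orderOf f).Coprime p) (h : ∀ w ∈ commutatorOmegaOne p f, f w = w) : f = 1 := by
  refine hG.eq_one_of_forall_mem_omegaOne hf fun x hx => ?_
  obtain ⟨c, -, hfc, hw⟩ := exists_fixed_mul_mem_of_coprime hf hx
  have e : c * (x * c⁻¹) = x := by rw [mul_comm x, mul_inv_cancel_left]
  rw [← e, map_mul, hfc, h _ hw]

lemma commutatorOmegaOne_le_mul {a b : MulAut G} (hb : (orderOf b).Coprime p)
    (ha : ∀ w ∈ commutatorOmegaOne p b, a w = w) :
    commutatorOmegaOne p a ≤ commutatorOmegaOne p (a * b) := by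
  rintro _ ⟨x, hx, rfl⟩
  obtain ⟨c, hc, hbc, hw⟩ := exists_fixed_mul_mem_of_coprime hb hx
  refine ⟨c, hc, ?_⟩
  have hw1 : a.commutatorHom (x * c⁻¹) = 1 := by simp [ha _ hw]
  calc (a * b).commutatorHom c = a.commutatorHom c := by simp [hbc]
    _ = a.commutatorHom x := by
      rw [← mul_one (a.commutatorHom c), ← hw1, ← map_mul, mul_comm x, mul_inv_cancel_left]

lemma commutatorOmegaOne_ne_bot (hG : IsPGroup p G) {f : MulAut G} (hf : (orderOf f).Coprime p)
    (hf1 : f ≠ 1) : commutatorOmegaOne p f ≠ ⊥ :=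
  fun h => hf1 (hG.eq_one_of_forall_mem_omegaOne hf (commutatorOmegaOne_eq_bot_iff.1 h))

variable [Fact p.Prime]

lemma isCyclic_of_commutatorOmegaOne_eq (hG : IsPGroup p G) {A : Subgroup (MulAut G)}
    (hA : ∀ f ∈ A, (orderOf f).Coprime p) {L : Subgroup G} (hL : Nat.card L = p)
    (hAL : ∀ f ∈ A, f ≠ 1 → commutatorOmegaOne p f = L) : IsCyclic A := by
  have hinv : ∀ a ∈ A, ∀ x ∈ L, a x ∈ L := by
    intro a ha x hx
    rcases eq_or_ne a 1 with rfl | ha1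
    · exact hx
    · rw [← hAL a ha ha1] at hx ⊢
      exact apply_mem_commutatorOmegaOne (Commute.refl a) hx
  have hinj : Function.Injective (MulAut.restrictHom A L hinv) := by
    rw [injective_iff_map_eq_one]
    intro a h
    by_contra ha1
    have ha1' : (a : MulAut G) ≠ 1 := fun h1 => ha1 (Subtype.ext h1)
    refine ha1' (hG.eq_one_of_forall_mem_commutatorOmegaOne (hA a a.2) fun w hw => ?_)
    rw [hAL a a.2 ha1'] at hw
    exact congrArg Subtype.val (DFunLike.congr_fun h ⟨w, hw⟩)
  have : Fact (Nat.card L).Prime := ⟨hL ▸ Fact.out⟩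
  have : IsCyclic L := isCyclic_of_prime_card rfl
  exact isCyclic_of_injective ((IsCyclic.mulAutMulEquiv L).toMonoidHom.comp _)
    ((IsCyclic.mulAutMulEquiv L).injective.comp hinj)

variable [Finite G]

lemma card_eq_of_le_omegaOne {U : Subgroup G} [IsCyclic U] (hU : U ≤ omegaOne p G)
    (hbot : U ≠ ⊥) : Nat.card U = p := by
  have hdvd : Nat.card U ∣ p := by
    rw [← IsCyclic.exponent_eq_card]
    exact Monoid.exponent_dvd_of_forall_pow_eq_one fun u => Subtype.ext (hU u.2)
  exact ((Nat.dvd_prime Fact.out).1 hdvd).resolve_left ((one_lt_card_iff_ne_bot U).2 hbot).ne'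

lemma eq_of_le_of_le_omegaOne {U V : Subgroup G} [IsCyclic V] (hV : V ≤ omegaOne p G)
    (hUV : U ≤ V) (hU : U ≠ ⊥) : U = V := by
  have : IsCyclic U := isCyclic_of_le hUV
  refine eq_of_le_of_card_ge hUV ?_
  rw [card_eq_of_le_omegaOne hV (ne_bot_of_le_ne_bot hU hUV),
    card_eq_of_le_omegaOne (hUV.trans hV) hU]

lemma apply_eq_self_of_commutatorOmegaOne_ne {a b : MulAut G} (hab : Commute a b)
    [IsCyclic (commutatorOmegaOne p a)] [IsCyclic (commutatorOmegaOne p b)]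
    (hne : commutatorOmegaOne p a ≠ commutatorOmegaOne p b) :
    ∀ w ∈ commutatorOmegaOne p b, a w = w := by
  intro w hw
  by_contra hfix
  have ht : a.commutatorHom w ∈ commutatorOmegaOne p a ⊓ commutatorOmegaOne p b :=
    mem_inf.2 ⟨⟨w, commutatorOmegaOne_le_omegaOne b hw, rfl⟩,
      mul_mem (inv_mem hw) (apply_mem_commutatorOmegaOne hab hw)⟩
  have hbot : commutatorOmegaOne p a ⊓ commutatorOmegaOne p b ≠ ⊥ := fun h => by
    rw [h, mem_bot, MulAut.commutatorHom_apply, inv_mul_eq_one] at ht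
    exact hfix ht.symm
  exact hne
    ((eq_of_le_of_le_omegaOne (commutatorOmegaOne_le_omegaOne a) inf_le_left hbot).symm.trans
      (eq_of_le_of_le_omegaOne (commutatorOmegaOne_le_omegaOne b) inf_le_right hbot))

lemma commutatorOmegaOne_eq_of_commute (hG : IsPGroup p G) {a b : MulAut G} (hab : Commute a b)
    (ha : (orderOf a).Coprime p) (hb : (orderOf b).Coprime p) (ha1 : a ≠ 1) (hb1 : b ≠ 1)
    [IsCyclic (commutatorOmegaOne p a)] [IsCyclic (commutatorOmegaOne p b)]
    [IsCyclic (commutatorOmegaOne p (a * b))] :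
    commutatorOmegaOne p a = commutatorOmegaOne p b := by
  by_contra hne
  have hle_a : commutatorOmegaOne p a ≤ commutatorOmegaOne p (a * b) :=
    commutatorOmegaOne_le_mul hb (apply_eq_self_of_commutatorOmegaOne_ne hab hne)
  have hle_b : commutatorOmegaOne p b ≤ commutatorOmegaOne p (a * b) := hab.eq ▸
    commutatorOmegaOne_le_mul ha (apply_eq_self_of_commutatorOmegaOne_ne hab.symm (Ne.symm hne))
  have hV := commutatorOmegaOne_le_omegaOne (p := p) (a * b)
  exact hne ((eq_of_le_of_le_omegaOne hV hle_a (commutatorOmegaOne_ne_bot hG ha ha1)).trans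
    (eq_of_le_of_le_omegaOne hV hle_b (commutatorOmegaOne_ne_bot hG hb hb1)).symm)

end CommGroup

theorem stmt_8_general (p : ℕ) [Fact p.Prime] (G : Type*) [CommGroup G] [Finite G]
    (hG : IsPGroup p G)
    (A : Subgroup (MulAut G)) (hAnc : ¬ IsCyclic A)
    (hAab : ∀ a ∈ A, ∀ b ∈ A, a * b = b * a)
    (hcop : (Nat.card A).Coprime p) :
    ∃ a ∈ A, ¬ IsCyclic (Subgroup.closure {x : G | ∃ g : G, x = g⁻¹ * a g}) := by
  by_contra! hcyc
  have hW : ∀ f ∈ A, IsCyclic (commutatorOmegaOne p f) := by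
    intro f hf
    have := hcyc f hf
    rw [MulAut.closure_inv_mul_apply_eq_range] at this
    exact isCyclic_of_le (commutatorOmegaOne_le_range f)
  have hA : ∀ f ∈ A, (orderOf f).Coprime p := fun f hf =>
    hcop.coprime_dvd_left (Subgroup.orderOf_dvd_natCard A hf)
  obtain ⟨a₀, ha₀, ha₀1⟩ :=
    (bot_or_exists_ne_one A).resolve_left fun h => hAnc (h ▸ inferInstance)
  have := hW a₀ ha₀
  refine hAnc (isCyclic_of_commutatorOmegaOne_eq hG hA (L := commutatorOmegaOne p a₀) ?_
    fun f hf hf1 => ?_)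
  · exact card_eq_of_le_omegaOne (commutatorOmegaOne_le_omegaOne a₀)
      (commutatorOmegaOne_ne_bot hG (hA a₀ ha₀) ha₀1)
  · have := hW f hf
    have := hW _ (mul_mem hf ha₀)
    exact commutatorOmegaOne_eq_of_commute hG (hAab f hf a₀ ha₀) (hA f hf) (hA a₀ ha₀) hf1 ha₀1

theorem stmt_8 (p : ℕ) [Fact p.Prime] (G : Type*) [CommGroup G] [Finite G]
    (hG : IsPGroup p G) (hGnc : ¬ IsCyclic G)
    (A : Subgroup (MulAut G)) (hAnc : ¬ IsCyclic A)
    (hAab : ∀ a ∈ A, ∀ b ∈ A, a * b = b * a)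
    (hcop : (Nat.card A).Coprime p) :
    ∃ a ∈ A, ¬ IsCyclic (Subgroup.closure {x : G | ∃ g : G, x = g⁻¹ * a g}) :=
  stmt_8_general p G hG A hAnc hAab hcop
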